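/- arXiv:2001.10598 — 3 statements merged into one kernel-verified Lean document; each statement's English description precedes it below -/
import Mathlib

section
/- For all β ∈ ℂ, the function f(x) = √x·(1 - βx)·ln(x) + 2β·x^(3/2) on (0,∞) satisfies L_{β,0} f(x) = β²·√x·(ln(x) - 2) for all x > 0, where L_{β,0} f = -f'' - (1/4)x⁻²f - βx⁻¹f. -/
open Set

private lemma whittaker_aux2 (β L s : ℂ) (hs : s ≠ 0) :
    -(L / (4 * (s * s ^ 2))) - β * (3 * L + 2) / (4 * s)
      = ((s ^ 2)⁻¹ * (2 * s) - L * (2 * (1 / (2 * s)))) / (2 * s) ^ 2 +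
          (0 * s - 1 * (1 / (2 * s))) / s ^ 2 -
        (3 / 2 * β * (1 / (2 * s)) * L + 3 / 2 * β * s * (s ^ 2)⁻¹) +
      2 * β * (1 / (2 * s)) := by
  have hp4 : s ^ 4 * s⁻¹ ^ 4 = 1 := by
    rw [← mul_pow, mul_inv_cancel₀ hs, one_pow]
  have hp12 : s ^ 12 * s⁻¹ ^ 12 = 1 := by
    rw [← mul_pow, mul_inv_cancel₀ hs, one_pow]
  field_simp [hs]
  ring

private lemma whittaker_aux3 (β L s : ℂ) (hs : s ≠ 0) :
    -(-(L / (4 * (s * s ^ 2))) - β * (3 * L + 2) / (4 * s))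
      - (1/4) / (s ^ 2) ^ 2 * (s * (1 - β * s ^ 2) * L + 2 * β * s * s ^ 2)
      - β / s ^ 2 * (s * (1 - β * s ^ 2) * L + 2 * β * s * s ^ 2)
      = β ^ 2 * s * (L - 2) := by
  have hp8 : s ^ 8 * s⁻¹ ^ 8 = 1 := by
    rw [← mul_pow, mul_inv_cancel₀ hs, one_pow]
  field_simp [hs]
  ring

/-- With `m = 0`, the function `f(x) = √x(1-βx)ln(x) + 2βx^(3/2)` satisfies
`L_{β,0} f(x) = β²·√x·(ln(x) - 2)` on `(0,∞)`, where
`L_{β,0} f = -f'' - (1/4)x⁻²f - βx⁻¹f`. -/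
theorem whittaker_zero_log_boundary_function (β : ℂ) (f : ℝ → ℂ)
    (hf : f = fun x : ℝ =>
      (Real.sqrt x : ℂ) * (1 - β * (x : ℂ)) * (Real.log x : ℂ)
        + 2 * β * (Real.sqrt x : ℂ) * (x : ℂ)) :
    ∀ x ∈ Ioi (0:ℝ),
      -(deriv (deriv f) x) - (1/4) / (x : ℂ) ^ 2 * f x - β / (x : ℂ) * f x
        = β ^ 2 * (Real.sqrt x : ℂ) * ((Real.log x : ℂ) - 2) := by
  have hd1 : ∀ x ∈ Ioi (0:ℝ), HasDerivAt f
      ((Real.log x : ℂ) / (2 * (Real.sqrt x : ℂ)) + 1 / (Real.sqrt x : ℂ)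
        - (3/2) * β * (Real.sqrt x : ℂ) * (Real.log x : ℂ)
        + 2 * β * (Real.sqrt x : ℂ)) x := by
    intro x hx
    have hx0 : (0:ℝ) < x := hx
    have hs0 : Real.sqrt x ≠ 0 := (Real.sqrt_pos.mpr hx0).ne'
    have hs0' : ((Real.sqrt x : ℝ) : ℂ) ≠ 0 := by exact_mod_cast hs0
    have hsq : ((Real.sqrt x : ℝ) : ℂ) ^ 2 = (x : ℂ) := by
      norm_cast; exact Real.sq_sqrt hx0.le
    have Hs : HasDerivAt (fun y : ℝ => ((Real.sqrt y : ℝ) : ℂ))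
        ((1 / (2 * Real.sqrt x) : ℝ) : ℂ) x :=
      (Real.hasDerivAt_sqrt hx0.ne').ofReal_comp
    have Hl : HasDerivAt (fun y : ℝ => ((Real.log y : ℝ) : ℂ)) (((x⁻¹ : ℝ)) : ℂ) x :=
      (Real.hasDerivAt_log hx0.ne').ofReal_comp
    have Hx : HasDerivAt (fun y : ℝ => ((y : ℝ) : ℂ)) (((1:ℝ)) : ℂ) x :=
      (hasDerivAt_id x).ofReal_comp
    have H := ((Hs.mul ((hasDerivAt_const x (1:ℂ)).sub (Hx.const_mul β))).mul Hl).add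
      (((Hs.const_mul (2 * β)).mul Hx))
    rw [hf]
    convert H using 1
    · rfl
    · rfl
    simp only [Pi.sub_apply, Pi.mul_apply]
    push_cast
    rw [← hsq]
    field_simp [hs0']
    ring
  have hd2 : ∀ x ∈ Ioi (0:ℝ), HasDerivAt (fun x : ℝ =>
      (Real.log x : ℂ) / (2 * (Real.sqrt x : ℂ)) + 1 / (Real.sqrt x : ℂ)
        - (3/2) * β * (Real.sqrt x : ℂ) * (Real.log x : ℂ)
        + 2 * β * (Real.sqrt x : ℂ))
      (-((Real.log x : ℂ) / (4 * ((Real.sqrt x : ℂ) * ((Real.sqrt x : ℂ)) ^ 2)))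
        - β * (3 * (Real.log x : ℂ) + 2) / (4 * (Real.sqrt x : ℂ))) x := by
    intro x hx
    have hx0 : (0:ℝ) < x := hx
    have hs0 : Real.sqrt x ≠ 0 := (Real.sqrt_pos.mpr hx0).ne'
    have hs0' : ((Real.sqrt x : ℝ) : ℂ) ≠ 0 := by exact_mod_cast hs0
    have hsq : ((Real.sqrt x : ℝ) : ℂ) ^ 2 = (x : ℂ) := by
      norm_cast; exact Real.sq_sqrt hx0.le
    have Hs : HasDerivAt (fun y : ℝ => ((Real.sqrt y : ℝ) : ℂ))
        ((1 / (2 * Real.sqrt x) : ℝ) : ℂ) x :=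
      (Real.hasDerivAt_sqrt hx0.ne').ofReal_comp
    have Hl : HasDerivAt (fun y : ℝ => ((Real.log y : ℝ) : ℂ)) (((x⁻¹ : ℝ)) : ℂ) x :=
      (Real.hasDerivAt_log hx0.ne').ofReal_comp
    have h2s : HasDerivAt (fun y : ℝ => 2 * ((Real.sqrt y : ℝ) : ℂ))
        (2 * ((1 / (2 * Real.sqrt x) : ℝ) : ℂ)) x := Hs.const_mul 2
    have h2s0 : 2 * ((Real.sqrt x : ℝ) : ℂ) ≠ 0 := by simp [hs0']
    have H := (((Hl.div h2s h2s0).add ((hasDerivAt_const x (1:ℂ)).div Hs hs0')).sub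
        (((Hs.const_mul ((3/2) * β)).mul Hl))).add (Hs.const_mul (2 * β))
    convert H using 1
    · rfl
    · rfl
    push_cast
    rw [← hsq]
    exact whittaker_aux2 β _ _ hs0'
  intro x hx
  have hx0 : (0:ℝ) < x := hx
  have hs0 : Real.sqrt x ≠ 0 := (Real.sqrt_pos.mpr hx0).ne'
  have hs0' : ((Real.sqrt x : ℝ) : ℂ) ≠ 0 := by exact_mod_cast hs0
  have hsq : ((Real.sqrt x : ℝ) : ℂ) ^ 2 = (x : ℂ) := by
    norm_cast; exact Real.sq_sqrt hx0.le
  have hev : deriv f =ᶠ[nhds x] (fun x : ℝ =>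
      (Real.log x : ℂ) / (2 * (Real.sqrt x : ℂ)) + 1 / (Real.sqrt x : ℂ)
        - (3/2) * β * (Real.sqrt x : ℂ) * (Real.log x : ℂ)
        + 2 * β * (Real.sqrt x : ℂ)) :=
    Filter.eventuallyEq_of_mem (isOpen_Ioi.mem_nhds hx) fun y hy => (hd1 y hy).deriv
  have hdd : deriv (deriv f) x
      = -((Real.log x : ℂ) / (4 * ((Real.sqrt x : ℂ) * ((Real.sqrt x : ℂ)) ^ 2)))
        - β * (3 * (Real.log x : ℂ) + 2) / (4 * (Real.sqrt x : ℂ)) := by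
    rw [hev.deriv_eq, (hd2 x hx).deriv]
  rw [hdd, hf]
  simp only
  rw [← hsq]
  exact whittaker_aux3 β _ _ hs0'
end

section
/- Pointwise limit of rescaled Whittaker functions: for fixed x > 0, m ∈ ℂ with |Re(m)| < 1, and β ∈ ℂ \ {0}, lim_{k→0, Re(k)>0} (2k)^{-(1/2+m)} · I_{β/(2k),m}(2kx) = β^{-m-1/2} · (βx)^{1/4} · J_{2m}(2√(βx)) / √π, where I_{δ,m}(z) = z^{1/2+m} e^{-z/2} Σ_{j≥0} (1/2+m-δ)_j z^j / (Γ(1+2m+j) j!) and J_ν(z) = Σ_{n≥0} (-1)^n √π (z/2)^{2n+ν+1/2} / (n! Γ(ν+n+1)) is the Bessel function for dimension 1. -/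
open Filter Set
open Topology

/-- The complex Pochhammer symbol `(a)_j = a(a+1)⋯(a+j-1)`. -/
noncomputable def pochC (a : ℂ) (j : ℕ) : ℂ := ∏ i ∈ Finset.range j, (a + i)

/-- The Whittaker function `I_{δ,m}(z) = z^{1/2+m} e^{-z/2}
Σ_{j≥0} ((1/2+m-δ)_j / Γ(1+2m+j)) z^j/j!`. -/
noncomputable def whittakerI (δ m z : ℂ) : ℂ :=
  z ^ ((1/2 : ℂ) + m) * Complex.exp (-z / 2)
    * ∑' j : ℕ, pochC (1/2 + m - δ) j / Complex.Gamma (1 + 2 * m + j) * z ^ j / (j.factorial : ℂ)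

/-- The Bessel function for dimension 1:
`J_ν(z) = Σ_{n≥0} (-1)^n √π (z/2)^{2n+ν+1/2}/(n! Γ(ν+n+1))`. -/
noncomputable def besselJ1 (ν z : ℂ) : ℂ :=
  ∑' n : ℕ, (-1) ^ n * (Real.sqrt Real.pi : ℂ) * (z / 2) ^ (2 * (n : ℂ) + ν + 1/2)
    / ((n.factorial : ℂ) * Complex.Gamma (ν + n + 1))


lemma mul_real_cpow {w : ℂ} (hw : w ≠ 0) {x : ℝ} (hx : 0 < x) (c : ℂ) :
    (w * (x : ℂ)) ^ c = w ^ c * (x : ℂ) ^ c := by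
  have hx' : (x : ℂ) ≠ 0 := Complex.ofReal_ne_zero.mpr hx.ne'
  rw [Complex.cpow_def_of_ne_zero (mul_ne_zero hw hx'), Complex.cpow_def_of_ne_zero hw,
    Complex.cpow_def_of_ne_zero hx', Complex.log_mul_ofReal x hx w hw, ← Complex.ofReal_log hx.le,
    add_mul, Complex.exp_add, mul_comm (Complex.exp _)]

lemma value_eq (x : ℝ) (hx : 0 < x) (m β : ℂ) (hβ : β ≠ 0) :
    β ^ (-m - 1/2) * (β * (x : ℂ)) ^ ((1/4 : ℂ))
      * besselJ1 (2 * m) (2 * (β * (x : ℂ)) ^ ((1/2 : ℂ))) / (Real.sqrt Real.pi : ℂ)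
    = (x:ℂ) ^ ((1/2:ℂ) + m)
      * ∑' j : ℕ, (-β) ^ j / Complex.Gamma (1 + 2*m + j) * (x:ℂ) ^ j / (j.factorial : ℂ) := by
  have hx' : (x : ℂ) ≠ 0 := Complex.ofReal_ne_zero.mpr hx.ne'
  have hβx : β * (x : ℂ) ≠ 0 := mul_ne_zero hβ hx'
  have hsp : (Real.sqrt Real.pi : ℂ) ≠ 0 :=
    Complex.ofReal_ne_zero.mpr (Real.sqrt_pos.mpr Real.pi_pos).ne'
  have key : β ^ (-m - 1/2) * (β * (x:ℂ)) ^ ((1/4:ℂ)) * (β * (x:ℂ)) ^ (m + 1/4)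
      = (x:ℂ) ^ ((1/2:ℂ) + m) := by
    rw [mul_assoc, ← Complex.cpow_add _ _ hβx, show (1/4:ℂ) + (m + 1/4) = m + 1/2 by ring,
      mul_real_cpow hβ hx, ← mul_assoc, ← Complex.cpow_add _ _ hβ,
      show -m - 1/2 + (m + 1/2) = (0:ℂ) by ring, Complex.cpow_zero, one_mul,
      show (m + 1/2 : ℂ) = 1/2 + m by ring]
  have h1 : ∀ n : ℕ, ((β * (x:ℂ)) ^ ((1/2:ℂ))) ^ (2 * (n:ℂ) + 2*m + 1/2)
      = β ^ n * (x:ℂ) ^ n * (β * (x:ℂ)) ^ (m + 1/4) := by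
    intro n
    rw [← Complex.cpow_mul]
    · rw [show (1/2:ℂ) * (2 * (n:ℂ) + 2*m + 1/2) = (n:ℂ) + (m + 1/4) by ring,
        Complex.cpow_add _ _ hβx, Complex.cpow_natCast, mul_pow]
    · have : (Complex.log (β * (x:ℂ)) * (1/2)).im = (β * (x:ℂ)).arg / 2 := by
        simp [Complex.mul_im, Complex.log_im]; ring
      rw [this]
      have := Complex.neg_pi_lt_arg (β * (x:ℂ))
      linarith [Real.pi_pos]
    · have : (Complex.log (β * (x:ℂ)) * (1/2)).im = (β * (x:ℂ)).arg / 2 := by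
        simp [Complex.mul_im, Complex.log_im]; ring
      rw [this]
      have := Complex.arg_le_pi (β * (x:ℂ))
      linarith [Real.pi_pos]
  rw [besselJ1, show (2 * (β * (x:ℂ)) ^ ((1/2:ℂ)) / 2) = (β * (x:ℂ)) ^ ((1/2:ℂ)) by ring,
    ← tsum_mul_left, ← tsum_div_const, ← tsum_mul_left]
  refine tsum_congr fun n => ?_
  rw [h1 n, show (2*m + (n:ℂ) + 1) = 1 + 2*m + (n:ℂ) by ring]
  by_cases hΓ : Complex.Gamma (1 + 2*m + (n:ℂ)) = 0
  · simp [hΓ]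
  · calc β ^ (-m - 1/2) * (β * (x:ℂ)) ^ ((1/4:ℂ))
          * ((-1)^n * (Real.sqrt Real.pi : ℂ) * (β ^ n * (x:ℂ) ^ n * (β * (x:ℂ)) ^ (m + 1/4))
            / ((n.factorial : ℂ) * Complex.Gamma (1 + 2*m + (n:ℂ))))
          / (Real.sqrt Real.pi : ℂ)
        = (β ^ (-m - 1/2) * (β * (x:ℂ)) ^ ((1/4:ℂ)) * (β * (x:ℂ)) ^ (m + 1/4))
            * ((-β)^n / Complex.Gamma (1 + 2*m + (n:ℂ)) * (x:ℂ)^n / (n.factorial : ℂ))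
            * ((Real.sqrt Real.pi : ℂ) / (Real.sqrt Real.pi : ℂ)) := by
          rw [neg_pow]; ring
      _ = _ := by rw [div_self hsp, mul_one, key]

noncomputable def whitAux (m β : ℂ) (x : ℝ) (k : ℂ) (j : ℕ) : ℂ :=
  (∏ i ∈ Finset.range j, (2*k*((1/2:ℂ)+m+i) - β)) / Complex.Gamma (1+2*m+j)
    * (x:ℂ)^j / (j.factorial : ℂ)

noncomputable def whitBound (m β : ℂ) (x : ℝ) (j : ℕ) : ℝ :=
  (∏ i ∈ Finset.range j, (2*(‖(1/2:ℂ)+m‖+i)+‖β‖)) * x^j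
    / (‖Complex.Gamma (1+2*m+j)‖ * (j.factorial : ℝ))

lemma whitAux_tendsto (m β : ℂ) (x : ℝ) (l : Filter ℂ) (hl : l ≤ nhds 0) (j : ℕ) :
    Tendsto (fun k => whitAux m β x k j) l
      (𝓝 ((-β)^j / Complex.Gamma (1+2*m+j) * (x:ℂ)^j / (j.factorial : ℂ))) := by
  have hc : Continuous fun k : ℂ => whitAux m β x k j := by
    unfold whitAux
    exact (((continuous_finset_prod _ fun i _ => by fun_prop).div_const _).mul continuous_const).div_const _
  have h0 : whitAux m β x 0 j = (-β)^j / Complex.Gamma (1+2*m+j) * (x:ℂ)^j / (j.factorial : ℂ) := by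
    simp [whitAux, Finset.prod_const]
  simpa [h0] using (hc.tendsto 0).mono_left hl

lemma whitAux_bound (m β : ℂ) {x : ℝ} (hx : 0 ≤ x) {k : ℂ} (hk : ‖k‖ ≤ 1) (j : ℕ) :
    ‖whitAux m β x k j‖ ≤ whitBound m β x j := by
  by_cases hΓ : Complex.Gamma (1+2*m+(j:ℂ)) = 0
  · simp [whitAux, whitBound, hΓ]
  have hΓ' : 0 < ‖Complex.Gamma (1+2*m+(j:ℂ))‖ := norm_pos_iff.mpr hΓ
  have hprod : ‖∏ i ∈ Finset.range j, (2*k*((1/2:ℂ)+m+i) - β)‖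
      ≤ ∏ i ∈ Finset.range j, (2*(‖(1/2:ℂ)+m‖+i)+‖β‖) := by
    rw [norm_prod]
    refine Finset.prod_le_prod (fun i _ => norm_nonneg _) (fun i _ => ?_)
    have h1 : ‖((1/2:ℂ)+m+(i:ℂ))‖ ≤ ‖(1/2:ℂ)+m‖ + i := by
      simpa using norm_add_le ((1/2:ℂ)+m) (i:ℂ)
    calc ‖2*k*((1/2:ℂ)+m+(i:ℂ)) - β‖ ≤ ‖2*k*((1/2:ℂ)+m+(i:ℂ))‖ + ‖β‖ := norm_sub_le _ _
      _ ≤ 2*(‖(1/2:ℂ)+m‖+i)+‖β‖ := by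
          have : ‖2*k*((1/2:ℂ)+m+(i:ℂ))‖ = 2*‖k‖*‖(1/2:ℂ)+m+(i:ℂ)‖ := by
            simp [norm_mul]
          rw [this]
          have hn := norm_nonneg ((1/2:ℂ)+m+(i:ℂ))
          have hk0 := norm_nonneg k
          nlinarith
  have hLHS : ‖whitAux m β x k j‖ = ‖∏ i ∈ Finset.range j, (2*k*((1/2:ℂ)+m+i) - β)‖ * x^j
      / (‖Complex.Gamma (1+2*m+(j:ℂ))‖ * (j.factorial : ℝ)) := by
    simp [whitAux, norm_div, norm_mul, norm_pow, abs_of_nonneg hx]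
    try ring
  rw [hLHS, whitBound]
  gcongr

lemma whitBound_summable (m β : ℂ) (hm : -1 < m.re) {x : ℝ} (hx : 0 < x) :
    Summable (whitBound m β x) := by
  obtain ⟨N, hN⟩ := exists_nat_ge (2*(2*‖(1/2:ℂ)+m‖+‖β‖+2)*x + 2)
  apply summable_of_ratio_norm_eventually_le (r := 1/2) (by norm_num)
  filter_upwards [eventually_ge_atTop (max N 2)] with j hj
  set M := ‖(1/2:ℂ)+m‖ with hM
  set B := ‖β‖ with hB
  have hj2 : (2:ℝ) ≤ (j:ℝ) := by exact_mod_cast le_trans (le_max_right _ _) hj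
  have hjN : (N:ℝ) ≤ (j:ℝ) := by exact_mod_cast le_trans (le_max_left _ _) hj
  have hre : (1 + 2*m + (j:ℂ)).re = 1 + 2*m.re + (j:ℝ) := by simp
  have hrepos : 0 < (1 + 2*m + (j:ℂ)).re := by rw [hre]; linarith
  have hne : (1 + 2*m + (j:ℂ)) ≠ 0 := fun h => by rw [h] at hrepos; simp at hrepos
  have hnorm_lb : (j:ℝ) - 1 ≤ ‖(1+2*m+(j:ℂ))‖ := by
    have h1 := Complex.re_le_norm (1+2*m+(j:ℂ))
    rw [hre] at h1
    linarith
  have hnormpos : 0 < ‖(1+2*m+(j:ℂ))‖ := by linarith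
  have hΓ : Complex.Gamma (1+2*m+(j:ℂ)) ≠ 0 := Complex.Gamma_ne_zero_of_re_pos hrepos
  have hΓpos : 0 < ‖Complex.Gamma (1+2*m+(j:ℂ))‖ := norm_pos_iff.mpr hΓ
  have hΓrec : ‖Complex.Gamma (1+2*m+((j+1:ℕ):ℂ))‖
      = ‖(1+2*m+(j:ℂ))‖ * ‖Complex.Gamma (1+2*m+(j:ℂ))‖ := by
    have h1 : (1+2*m+((j+1:ℕ):ℂ)) = (1+2*m+(j:ℂ)) + 1 := by push_cast; ring
    rw [h1, Complex.Gamma_add_one _ hne, norm_mul]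
  have hfacpos : (0:ℝ) < (j.factorial : ℝ) := by exact_mod_cast j.factorial_pos
  have hb : whitBound m β x (j+1)
      = whitBound m β x j * ((2*(M+(j:ℝ))+B) * x / (‖(1+2*m+(j:ℂ))‖ * ((j:ℝ)+1))) := by
    unfold whitBound
    rw [Finset.prod_range_succ, pow_succ, hΓrec, Nat.factorial_succ]
    push_cast
    rw [← hM, ← hB]
    field_simp
  have hkey : (2*(M+(j:ℝ))+B) * x / (‖(1+2*m+(j:ℂ))‖ * ((j:ℝ)+1)) ≤ 1/2 := by
    rw [div_le_iff₀ (by positivity)]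
    have hM0 : 0 ≤ M := norm_nonneg _
    have hB0 : 0 ≤ B := norm_nonneg _
    have h2 : ((j:ℝ)-1)*((j:ℝ)+1) ≤ ‖(1+2*m+(j:ℂ))‖ * ((j:ℝ)+1) :=
      mul_le_mul_of_nonneg_right hnorm_lb (by linarith)
    have hs : 2*(2*M+B+2)*x + 2 ≤ (j:ℝ) := le_trans hN hjN
    have e1 : (2*(M+(j:ℝ))+B) * x ≤ (2*M+B+2) * (j:ℝ) * x := by
      nlinarith [mul_nonneg (mul_nonneg (by linarith : (0:ℝ) ≤ 2*M+B)
        (by linarith : (0:ℝ) ≤ (j:ℝ)-1)) hx.le]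
    have e2 : (2*M+B+2) * (j:ℝ) * x ≤ 1/2 * (((j:ℝ)-1) * ((j:ℝ)+1)) := by
      nlinarith [mul_le_mul_of_nonneg_right
        (show 2*(2*M+B+2)*x+1 ≤ (j:ℝ)-1 by linarith)
        (show (0:ℝ) ≤ (j:ℝ)+1 by linarith),
        mul_nonneg (mul_nonneg (by linarith : (0:ℝ) ≤ 2*M+B+2) hx.le)
        (by linarith : (0:ℝ) ≤ (j:ℝ)+1)]
    linarith [e1, e2, h2]
  have hbnn : 0 ≤ whitBound m β x j := by unfold whitBound; positivity
  have hbnn' : 0 ≤ whitBound m β x (j+1) := by unfold whitBound; positivity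
  rw [Real.norm_eq_abs, Real.norm_eq_abs, abs_of_nonneg hbnn', abs_of_nonneg hbnn, hb]
  calc whitBound m β x j * ((2*(M+(j:ℝ))+B) * x / (‖(1+2*m+(j:ℂ))‖ * ((j:ℝ)+1)))
      ≤ whitBound m β x j * (1/2) := mul_le_mul_of_nonneg_left hkey hbnn
    _ = 1/2 * whitBound m β x j := by ring

/-- Pointwise limit of rescaled Whittaker functions: for fixed `x > 0`,
`|Re(m)| < 1` and `β ≠ 0`,
`(2k)^{-(1/2+m)}·I_{β/(2k),m}(2kx) → β^{-m-1/2}·(βx)^{1/4}·J_{2m}(2√(βx))/√π`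
as `k → 0` with `Re(k) > 0`. -/
theorem whittakerI_rescaled_limit (x : ℝ) (hx : 0 < x) (m β : ℂ)
    (hm : |m.re| < 1) (hβ : β ≠ 0) :
    Tendsto (fun k : ℂ =>
        (2 * k) ^ (-((1/2 : ℂ) + m)) * whittakerI (β / (2 * k)) m (2 * k * x))
      (nhdsWithin 0 {k : ℂ | 0 < k.re})
      (nhds (β ^ (-m - 1/2) * (β * (x : ℂ)) ^ ((1/4 : ℂ))
        * besselJ1 (2 * m) (2 * (β * (x : ℂ)) ^ ((1/2 : ℂ))) / (Real.sqrt Real.pi : ℂ))) := by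
  have hm' : -1 < m.re := (abs_lt.mp hm).1
  rw [value_eq x hx m β hβ]
  have hsum : Tendsto (fun k : ℂ => ∑' j, whitAux m β x k j)
      (𝓝[{k : ℂ | 0 < k.re}] 0)
      (𝓝 (∑' j : ℕ, (-β)^j / Complex.Gamma (1 + 2*m + j) * (x:ℂ)^j / (j.factorial : ℂ))) := by
    apply tendsto_tsum_of_dominated_convergence (whitBound_summable m β hm' hx)
    · exact fun j => whitAux_tendsto m β x _ nhdsWithin_le_nhds j
    · have h1 : ∀ᶠ k : ℂ in 𝓝[{k : ℂ | 0 < k.re}] 0, ‖k‖ ≤ 1 := by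
        apply Filter.Eventually.filter_mono nhdsWithin_le_nhds
        filter_upwards [Metric.closedBall_mem_nhds (0:ℂ) one_pos] with k hk
        simpa [dist_zero_right] using hk
      filter_upwards [h1] with k hk j
      exact whitAux_bound m β hx.le hk j
  have hexp : Tendsto (fun k : ℂ => Complex.exp (-(2*k*(x:ℂ))/2))
      (𝓝[{k : ℂ | 0 < k.re}] 0) (𝓝 1) := by
    have hc : Continuous fun k : ℂ => Complex.exp (-(2*k*(x:ℂ))/2) := by fun_prop
    simpa using (hc.tendsto 0).mono_left nhdsWithin_le_nhds
  have hF : Tendsto (fun k : ℂ => (x:ℂ)^((1/2:ℂ)+m) * Complex.exp (-(2*k*(x:ℂ))/2)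
        * ∑' j, whitAux m β x k j)
      (𝓝[{k : ℂ | 0 < k.re}] 0)
      (𝓝 ((x:ℂ)^((1/2:ℂ)+m)
        * ∑' j : ℕ, (-β)^j / Complex.Gamma (1 + 2*m + j) * (x:ℂ)^j / (j.factorial : ℂ))) := by
    have h := ((tendsto_const_nhds (x := (x:ℂ)^((1/2:ℂ)+m))
      (f := 𝓝[{k : ℂ | 0 < k.re}] (0:ℂ))).mul hexp).mul hsum
    simpa using h
  refine hF.congr' ?_
  filter_upwards [self_mem_nhdsWithin] with k hk
  have hk0 : k ≠ 0 := by rintro rfl; simp at hk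
  have h2k : (2:ℂ)*k ≠ 0 := mul_ne_zero two_ne_zero hk0
  have hts : (∑' j : ℕ, pochC (1/2 + m - β/(2*k)) j / Complex.Gamma (1 + 2*m + j)
        * (2*k*(x:ℂ))^j / (j.factorial : ℂ)) = ∑' j, whitAux m β x k j := by
    refine tsum_congr fun j => ?_
    have hp : pochC (1/2 + m - β/(2*k)) j * (2*k)^j
        = ∏ i ∈ Finset.range j, (2*k*((1/2:ℂ)+m+i) - β) := by
      rw [pochC, show ((2*k:ℂ))^j = ∏ _i ∈ Finset.range j, (2*k) by
        simp [Finset.prod_const], ← Finset.prod_mul_distrib]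
      refine Finset.prod_congr rfl fun i _ => ?_
      field_simp
      ring
    calc pochC (1/2 + m - β/(2*k)) j / Complex.Gamma (1 + 2*m + j)
          * (2*k*(x:ℂ))^j / (j.factorial : ℂ)
        = (pochC (1/2 + m - β/(2*k)) j * (2*k)^j) / Complex.Gamma (1 + 2*m + j)
          * (x:ℂ)^j / (j.factorial : ℂ) := by rw [mul_pow]; ring
      _ = whitAux m β x k j := by rw [hp, whitAux]
  show (x:ℂ)^((1/2:ℂ)+m) * Complex.exp (-(2*k*(x:ℂ))/2) * (∑' j, whitAux m β x k j)
      = (2*k) ^ (-((1/2:ℂ)+m)) * whittakerI (β/(2*k)) m (2*k*(x:ℂ))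
  rw [whittakerI, hts, mul_real_cpow h2k hx ((1/2:ℂ)+m)]
  have hcan : ((2:ℂ)*k) ^ (-((1/2:ℂ)+m)) * ((2*k) ^ ((1/2:ℂ)+m)) = 1 := by
    rw [← Complex.cpow_add _ _ h2k, show -((1/2:ℂ)+m)+((1/2:ℂ)+m) = 0 by ring,
      Complex.cpow_zero]
  calc (x:ℂ)^((1/2:ℂ)+m) * Complex.exp (-(2*k*(x:ℂ))/2) * (∑' j, whitAux m β x k j)
      = (((2:ℂ)*k) ^ (-((1/2:ℂ)+m)) * ((2*k) ^ ((1/2:ℂ)+m))) * ((x:ℂ)^((1/2:ℂ)+m)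
          * Complex.exp (-(2*k*(x:ℂ))/2) * (∑' j, whitAux m β x k j)) := by
        rw [hcan, one_mul]
    _ = _ := by ring
end

section
/- Uniform bound on rescaled Pochhammer symbols: for fixed β, m ∈ ℂ, there exists c > 0 such that for all k ∈ ℂ with 0 < |k| < 1 and all j ∈ ℕ, |(1/2 + m - β/(2k))_j · (2k)^j| ≤ c^j · j!. -/
/-- Uniform bound on rescaled Pochhammer symbols: for fixed `β, m ∈ ℂ` there is
`c > 0` with `|(1/2+m-β/(2k))_j · (2k)^j| ≤ c^j · j!` for all `0 < |k| < 1`, `j ∈ ℕ`. -/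
theorem pochhammer_rescaled_bound (β m : ℂ) :
    ∃ c > (0:ℝ), ∀ k : ℂ, k ≠ 0 → ‖k‖ < 1 → ∀ j : ℕ,
      ‖pochC (1/2 + m - β / (2 * k)) j * (2 * k) ^ j‖
        ≤ c ^ j * j.factorial := by
  set C : ℝ := 2 * ‖1/2 + m‖ + ‖β‖ + 2 with hC
  have hCpos : 0 < C := by positivity
  refine ⟨C, hCpos, ?_⟩
  intro k hk hk1 j
  have h2k : (2 : ℂ) * k ≠ 0 := by
    simp [hk]
  have h2kabs : ‖2 * k‖ ≤ 2 := by
    rw [norm_mul]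
    have := norm_nonneg k
    simp only [Complex.norm_two]
    nlinarith
  have key : pochC (1/2 + m - β / (2 * k)) j * (2 * k) ^ j
      = ∏ i ∈ Finset.range j, ((1/2 + m + (i : ℂ)) * (2 * k) - β) := by
    have hp : (2*k)^j = ∏ _i ∈ Finset.range j, (2*k) := by
      rw [Finset.prod_const, Finset.card_range]
    rw [pochC, hp, ← Finset.prod_mul_distrib]
    refine Finset.prod_congr rfl fun i _ => ?_
    field_simp
    ring
  rw [key, Complex.norm_prod]
  calc ∏ i ∈ Finset.range j, ‖(1/2 + m + (i : ℂ)) * (2 * k) - β‖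
      ≤ ∏ i ∈ Finset.range j, (C * (i + 1)) := by
        refine Finset.prod_le_prod (fun i _ => norm_nonneg _) (fun i _ => ?_)
        have h1 : ‖(1/2 + m + (i : ℂ)) * (2 * k) - β‖
            ≤ ‖1/2 + m + (i : ℂ)‖ * ‖2 * k‖ + ‖β‖ := by
          calc _ ≤ ‖(1/2 + m + (i : ℂ)) * (2 * k)‖ + ‖β‖ :=
                norm_sub_le _ _
            _ = _ := by rw [norm_mul]
        have h2 : ‖1/2 + m + (i : ℂ)‖ ≤ ‖1/2 + m‖ + i := by
          calc _ ≤ ‖1/2 + m‖ + ‖(i : ℂ)‖ := norm_add_le _ _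
            _ = _ := by rw [Complex.norm_natCast]
        have hi0 : (0:ℝ) ≤ (i:ℝ) := Nat.cast_nonneg i
        have habs0 : (0:ℝ) ≤ ‖1/2 + m‖ := norm_nonneg _
        have habs2 : (0:ℝ) ≤ ‖2*k‖ := norm_nonneg _
        rw [hC]
        have habsb : (0:ℝ) ≤ ‖β‖ := norm_nonneg _
        nlinarith [h1, h2kabs, mul_nonneg habs0 hi0, mul_nonneg habsb hi0, mul_le_mul_of_nonneg_right h2 habs2, mul_le_mul_of_nonneg_left h2kabs (add_nonneg habs0 hi0)]
    _ = C ^ j * j.factorial := by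
        rw [Finset.prod_mul_distrib, Finset.prod_const, Finset.card_range]
        congr 1
        exact_mod_cast congrArg (Nat.cast : ℕ → ℝ) (Finset.prod_range_add_one_eq_factorial j)
end
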